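/- Let 0 ≤ ρ ≤ 1, σ : ℤ → ℂ with |σ(ξ)| ≤ C|ξ|^{-ρ} for ξ ≠ 0, let q ∈ (0,∞), r ∈ ℝ, and s ∈ (0,1] with r + 1/2 - ρ < s. Then there is a constant C' such that for every 2π-periodic Hölder continuous f of order s: (∑_{m=0}^{∞} 2^{mrq} · (sup_x |∑_{2^m ≤ |ξ| < 2^{m+1}} σ(ξ) f̂(ξ) e^{ixξ}|)^q)^{1/q} ≤ C' ‖f‖_{Λ^s}. -/

import Mathlib

noncomputable def fourierCoef (f : ℝ → ℂ) (ξ : ℤ) : ℂ :=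
  (1 / (2 * Real.pi)) * ∫ x in (0:ℝ)..(2 * Real.pi), f x * Complex.exp (-(Complex.I * (ξ:ℂ) * (x:ℂ)))

noncomputable def dyadicBlock (m : ℕ) : Finset ℤ :=
  (Finset.Icc (-(2^(m+1) : ℤ)) (2^(m+1))).filter fun ξ => 2^m ≤ |ξ| ∧ |ξ| < 2^(m+1)

/-!
On the block `2^m ≤ |ξ| < 2^(m+1)` the difference `f (· - h) - f` with `h = π / 2^(m+1)` has
Fourier coefficients `(e^{-iξh} - 1) f̂(ξ)`, and `π/2 ≤ |ξh| ≤ π` gives `|e^{-iξh} - 1| ≥ 1`.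
Bessel's inequality for this difference (bounded by `B h^s`) and Cauchy–Schwarz over the
`≤ 2^(m+2)` frequencies of the block give `∑_block |f̂| ≲ B 2^{m(1/2 - s)}`. Together with
`|σ| ≲ 2^{-mρ}` on the block, each block of `Op(σ) f` is uniformly `≲ B 2^{m(1/2 - ρ - s)}`,
and `r + 1/2 - ρ - s < 0` makes the weighted `ℓ^q` sum a convergent geometric series.
-/

open Real Complex MeasureTheory Set Finset

theorem fourierCoef_eq_fourierCoeffOn (f : ℝ → ℂ) (ξ : ℤ) :
    fourierCoef f ξ = fourierCoeffOn two_pi_pos f ξ := by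
  rw [fourierCoeffOn_eq_integral, fourierCoef, sub_zero, Complex.real_smul]
  push_cast
  congr 1
  refine intervalIntegral.integral_congr fun x _ => ?_
  rw [fourier_coe_apply, smul_eq_mul, mul_comm]
  congr 2
  field_simp
  push_cast
  ring

theorem sum_sq_norm_fourierCoef_le {g : ℝ → ℂ}
    (hg : AEStronglyMeasurable g (volume.restrict (Ioc 0 (2 * π)))) {M : ℝ} (hM : ∀ x, ‖g x‖ ≤ M)
    (S : Finset ℤ) : ∑ ξ ∈ S, ‖fourierCoef g ξ‖ ^ 2 ≤ M ^ 2 := by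
  have parseval := hasSum_sq_fourierCoeffOn two_pi_pos (MemLp.of_bound hg M (.of_forall hM))
  simp_rw [← fourierCoef_eq_fourierCoeffOn, sub_zero] at parseval
  refine (sum_le_hasSum S (fun _ _ => sq_nonneg _) parseval).trans ?_
  have hbound : ‖∫ x in (0)..(2 * π), ‖g x‖ ^ 2‖ ≤ M ^ 2 * |2 * π - 0| :=
    intervalIntegral.norm_integral_le_of_norm_le_const fun x _ => by
      simpa using pow_le_pow_left₀ (norm_nonneg _) (hM x) 2
  rw [sub_zero, abs_of_pos two_pi_pos] at hbound
  rw [smul_eq_mul, inv_mul_le_iff₀ two_pi_pos]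
  linarith [(le_abs_self _).trans hbound]

theorem fourierCoef_sub {f g : ℝ → ℂ} (hf : IntervalIntegrable f volume 0 (2 * π))
    (hg : IntervalIntegrable g volume 0 (2 * π)) (ξ : ℤ) :
    fourierCoef (fun x => f x - g x) ξ = fourierCoef f ξ - fourierCoef g ξ := by
  have hexp : ContinuousOn (fun x : ℝ => cexp (-(I * ξ * x))) (uIcc 0 (2 * π)) :=
    Continuous.continuousOn (by fun_prop)
  simp only [fourierCoef, sub_mul]
  rw [intervalIntegral.integral_sub (hf.mul_continuousOn hexp) (hg.mul_continuousOn hexp), mul_sub]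

theorem periodic_mul_cexp_neg_I_int_mul {f : ℝ → ℂ} (hf : Function.Periodic f (2 * π)) (ξ : ℤ) :
    Function.Periodic (fun x : ℝ => f x * cexp (-(I * ξ * x))) (2 * π) := by
  intro x
  have : -(I * ξ * ↑(x + 2 * π)) = -(I * ξ * x) + (-ξ : ℤ) * (2 * π * I) := by push_cast; ring
  simp only [hf x, this, Complex.exp_add, exp_int_mul_two_pi_mul_I, mul_one]

theorem fourierCoef_comp_sub {f : ℝ → ℂ} (hf : Function.Periodic f (2 * π)) (h : ℝ) (ξ : ℤ) :
    fourierCoef (fun x => f (x - h)) ξ = cexp (-(I * ξ * h)) * fourierCoef f ξ := by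
  have hshift : ∀ x : ℝ, f (x - h) * cexp (-(I * ξ * x))
      = cexp (-(I * ξ * h)) * (f (x - h) * cexp (-(I * ξ * ↑(x - h)))) := fun x => by
    rw [mul_left_comm, ← Complex.exp_add]
    push_cast
    ring_nf
  have hperiod := (periodic_mul_cexp_neg_I_int_mul hf ξ).intervalIntegral_add_eq (-h) 0
  rw [zero_add, neg_add_eq_sub] at hperiod
  simp only [fourierCoef, hshift, intervalIntegral.integral_const_mul,
    intervalIntegral.integral_comp_sub_right (fun x => f x * cexp (-(I * ξ * x))), zero_sub,
    hperiod]
  ring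

theorem one_le_norm_exp_I_mul_sub_one {θ : ℝ} (hθ : Real.cos θ ≤ 1 / 2) :
    1 ≤ ‖cexp (I * θ) - 1‖ := by
  have hcos := Real.cos_two_mul' (θ / 2)
  rw [mul_div_cancel₀ θ two_ne_zero, Real.cos_sq'] at hcos
  rw [norm_exp_I_mul_ofReal_sub_one, Real.norm_eq_abs, ← one_le_sq_iff_one_le_abs, mul_pow]
  linarith

theorem mem_dyadicBlock {m : ℕ} {ξ : ℤ} :
    ξ ∈ dyadicBlock m ↔ (2:ℝ) ^ m ≤ |(ξ:ℝ)| ∧ |(ξ:ℝ)| < 2 ^ (m + 1) := by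
  rw [← Int.cast_abs]
  simp only [dyadicBlock, Finset.mem_filter, Finset.mem_Icc, ← abs_le]
  norm_cast
  exact ⟨fun h => h.2, fun h => ⟨h.2.le, h⟩⟩

theorem card_dyadicBlock_le (m : ℕ) : #(dyadicBlock m) ≤ 2 ^ (m + 2) := by
  have hsub : dyadicBlock m ⊆ Finset.Ioo (-(2 ^ (m + 1))) (2 ^ (m + 1)) := fun ξ hξ => by
    simp only [dyadicBlock, Finset.mem_filter, Finset.mem_Ioo, ← abs_lt] at hξ ⊢
    exact hξ.2.2
  refine (Finset.card_le_card hsub).trans ?_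
  rw [Int.card_Ioo, Int.toNat_le]
  push_cast
  ring_nf
  omega

theorem norm_fourierCoef_le_of_mem_dyadicBlock {f : ℝ → ℂ} (hf : Continuous f)
    (hper : Function.Periodic f (2 * π)) {m : ℕ} {ξ : ℤ} (hξ : ξ ∈ dyadicBlock m) :
    ‖fourierCoef f ξ‖ ≤ ‖fourierCoef (fun x => f (x - π / 2 ^ (m + 1)) - f x) ξ‖ := by
  set h : ℝ := π / 2 ^ (m + 1)
  obtain ⟨hlo, hhi⟩ := mem_dyadicBlock.mp hξ
  have hphase : Real.cos (-(ξ * h)) ≤ 1 / 2 := by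
    have hξh : |-(ξ * h)| = |(ξ:ℝ)| * h := by
      rw [abs_neg, abs_mul, abs_of_pos (by positivity : 0 < h)]
    have hlo' : π / 2 ≤ |(ξ:ℝ)| * h :=
      calc π / 2 = 2 ^ m * h := by simp only [h, pow_succ]; field_simp
        _ ≤ |(ξ:ℝ)| * h := by gcongr
    have hhi' : |(ξ:ℝ)| * h ≤ π :=
      calc |(ξ:ℝ)| * h ≤ 2 ^ (m + 1) * h := by gcongr
        _ = π := by simp only [h]; field_simp
    rw [← Real.cos_abs, hξh]
    linarith [Real.cos_nonpos_of_pi_div_two_le_of_le hlo' (by linarith [pi_pos])]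
  have hint : ∀ g : ℝ → ℂ, Continuous g → IntervalIntegrable g volume 0 (2 * π) :=
    fun g hg => hg.intervalIntegrable _ _
  rw [fourierCoef_sub (hint _ (by fun_prop)) (hint f hf), fourierCoef_comp_sub hper, ← sub_one_mul,
    norm_mul]
  refine le_mul_of_one_le_left (norm_nonneg _) ?_
  have harg : -(I * ξ * h) = I * ↑(-(ξ * h)) := by push_cast; ring
  rw [harg]
  exact one_le_norm_exp_I_mul_sub_one hphase

theorem sum_norm_fourierCoef_dyadicBlock_le {f : ℝ → ℂ} (hf : Continuous f)
    (hper : Function.Periodic f (2 * π)) {B s : ℝ} (hB : ∀ x y : ℝ, ‖f (x - y) - f x‖ ≤ B * |y| ^ s)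
    (m : ℕ) :
    ∑ ξ ∈ dyadicBlock m, ‖fourierCoef f ξ‖ ≤ 2 * (π / 2) ^ s * B * ((2:ℝ) ^ m) ^ (1 / 2 - s) := by
  have hB0 : 0 ≤ B := by simpa using (norm_nonneg _).trans (hB 0 1)
  set y : ℝ := 2 ^ m
  have hy0 : 0 < y := by positivity
  set h : ℝ := π / 2 ^ (m + 1)
  have hh : h = π / 2 * y⁻¹ := by simp only [h, y, pow_succ]; field_simp
  have hdiff : ∀ x, ‖f (x - h) - f x‖ ≤ B * h ^ s := fun x => by
    simpa [abs_of_pos (by positivity : 0 < h)] using hB x h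
  have hcard : √(#(dyadicBlock m) : ℝ) ≤ 2 * y ^ (1 / 2 : ℝ) := by
    have h4y : ((2 ^ (m + 2) : ℕ) : ℝ) = 2 ^ 2 * y := by push_cast; ring
    calc √(#(dyadicBlock m) : ℝ) ≤ √((2 ^ (m + 2) : ℕ) : ℝ) :=
          Real.sqrt_le_sqrt (by exact_mod_cast card_dyadicBlock_le m)
      _ = 2 * y ^ (1 / 2 : ℝ) := by
          rw [h4y, Real.sqrt_mul (by norm_num), Real.sqrt_sq two_pos.le, Real.sqrt_eq_rpow]
  calc ∑ ξ ∈ dyadicBlock m, ‖fourierCoef f ξ‖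
      ≤ ∑ ξ ∈ dyadicBlock m, 1 * ‖fourierCoef (fun x => f (x - h) - f x) ξ‖ := by
        simp only [one_mul]
        exact Finset.sum_le_sum fun ξ hξ => norm_fourierCoef_le_of_mem_dyadicBlock hf hper hξ
    _ ≤ √(∑ ξ ∈ dyadicBlock m, 1 ^ 2) *
          √(∑ ξ ∈ dyadicBlock m, ‖fourierCoef (fun x => f (x - h) - f x) ξ‖ ^ 2) :=
        Real.sum_mul_le_sqrt_mul_sqrt _ _ _
    _ ≤ (2 * y ^ (1 / 2 : ℝ)) * (B * h ^ s) := by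
        gcongr
        · simpa using hcard
        · rw [← Real.sqrt_sq (by positivity : 0 ≤ B * h ^ s)]
          exact Real.sqrt_le_sqrt (sum_sq_norm_fourierCoef_le (by fun_prop) hdiff _)
    _ = 2 * (π / 2) ^ s * B * y ^ (1 / 2 - s) := by
        rw [hh, mul_rpow (by positivity) (by positivity), inv_rpow hy0.le, sub_eq_add_neg,
          rpow_add hy0, rpow_neg hy0.le]
        ring

theorem rpow_neg_abs_le_of_mem_dyadicBlock {ρ : ℝ} (hρ : 0 ≤ ρ) {m : ℕ} {ξ : ℤ}
    (hξ : ξ ∈ dyadicBlock m) : |(ξ:ℝ)| ^ (-ρ) ≤ ((2:ℝ) ^ m) ^ (-ρ) :=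
  rpow_le_rpow_of_nonpos (by positivity) (mem_dyadicBlock.mp hξ).1 (neg_nonpos.mpr hρ)

theorem norm_sum_dyadicBlock_multiplier_le {ρ C : ℝ} (hρ : 0 ≤ ρ) {σ : ℤ → ℂ}
    (hσ : ∀ ξ : ℤ, ξ ≠ 0 → ‖σ ξ‖ ≤ C * |(ξ:ℝ)| ^ (-ρ)) {f : ℝ → ℂ} (hf : Continuous f)
    (hper : Function.Periodic f (2 * π)) {B s : ℝ} (hB : ∀ x y : ℝ, ‖f (x - y) - f x‖ ≤ B * |y| ^ s)
    (m : ℕ) (x : ℝ) :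
    ‖∑ ξ ∈ dyadicBlock m, σ ξ * fourierCoef f ξ * cexp (I * x * ξ)‖
      ≤ 2 * C * (π / 2) ^ s * B * ((2:ℝ) ^ m) ^ (1 / 2 - ρ - s) := by
  have hC : 0 ≤ C := by simpa using (norm_nonneg _).trans (hσ 1 one_ne_zero)
  have hσm : ∀ ξ ∈ dyadicBlock m, ‖σ ξ‖ ≤ C * ((2:ℝ) ^ m) ^ (-ρ) := fun ξ hξ => by
    have hξ0 : ξ ≠ 0 := by
      rintro rfl
      have h := (mem_dyadicBlock.mp hξ).1
      simp only [Int.cast_zero, abs_zero] at h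
      exact h.not_gt (by positivity)
    exact (hσ ξ hξ0).trans (mul_le_mul_of_nonneg_left (rpow_neg_abs_le_of_mem_dyadicBlock hρ hξ) hC)
  calc ‖∑ ξ ∈ dyadicBlock m, σ ξ * fourierCoef f ξ * cexp (I * x * ξ)‖
      ≤ ∑ ξ ∈ dyadicBlock m, ‖σ ξ‖ * ‖fourierCoef f ξ‖ := by
        refine (norm_sum_le _ _).trans (Finset.sum_le_sum fun ξ _ => ?_)
        rw [norm_mul, norm_mul, show I * x * ξ = ↑(x * ξ) * I by push_cast; ring,
          norm_exp_ofReal_mul_I, mul_one]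
    _ ≤ ∑ ξ ∈ dyadicBlock m, C * ((2:ℝ) ^ m) ^ (-ρ) * ‖fourierCoef f ξ‖ :=
        Finset.sum_le_sum fun ξ hξ => by gcongr; exact hσm ξ hξ
    _ ≤ C * ((2:ℝ) ^ m) ^ (-ρ) * (2 * (π / 2) ^ s * B * ((2:ℝ) ^ m) ^ (1 / 2 - s)) := by
        rw [← Finset.mul_sum]
        gcongr
        exact sum_norm_fourierCoef_dyadicBlock_le hf hper hB m
    _ = 2 * C * (π / 2) ^ s * B * ((2:ℝ) ^ m) ^ (1 / 2 - ρ - s) := by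
        rw [show 1 / 2 - ρ - s = -ρ + (1 / 2 - s) by ring, rpow_add (by positivity)]
        ring

theorem rpow_tsum_two_rpow_mul_rpow_le {a : ℕ → ℝ} {r δ q D : ℝ} (hq : 0 < q) (hrδ : r + δ < 0)
    (ha0 : ∀ m, 0 ≤ a m) (ha : ∀ m : ℕ, a m ≤ D * ((2:ℝ) ^ m) ^ δ) :
    (∑' m : ℕ, (2:ℝ) ^ ((m:ℝ) * r * q) * a m ^ q) ^ (1 / q)
      ≤ D * ((1 - (2:ℝ) ^ ((r + δ) * q))⁻¹) ^ (1 / q) := by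
  have hD : 0 ≤ D := by simpa using (ha0 0).trans (ha 0)
  set t : ℝ := (2:ℝ) ^ ((r + δ) * q)
  have ht0 : 0 ≤ t := by positivity
  have ht1 : t < 1 := rpow_lt_one_of_one_lt_of_neg one_lt_two (mul_neg_of_neg_of_pos hrδ hq)
  have hterm : ∀ m : ℕ, (2:ℝ) ^ ((m:ℝ) * r * q) * a m ^ q ≤ D ^ q * t ^ m := fun m =>
    calc (2:ℝ) ^ ((m:ℝ) * r * q) * a m ^ q
        ≤ (2:ℝ) ^ ((m:ℝ) * r * q) * (D * ((2:ℝ) ^ m) ^ δ) ^ q := by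
          gcongr
          exacts [ha0 m, ha m]
      _ = D ^ q * t ^ m := by
          rw [mul_rpow hD (by positivity), ← rpow_natCast_mul two_pos.le, ← rpow_mul two_pos.le,
            ← rpow_natCast, ← rpow_mul two_pos.le, mul_left_comm, ← rpow_add two_pos]
          ring_nf
  have hgeom : HasSum (fun m : ℕ => D ^ q * t ^ m) (D ^ q * (1 - t)⁻¹) :=
    (hasSum_geometric_of_lt_one ht0 ht1).mul_left _
  have hsum : ∑' m : ℕ, (2:ℝ) ^ ((m:ℝ) * r * q) * a m ^ q ≤ D ^ q * (1 - t)⁻¹ :=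
    tsum_le_of_sum_le' (by positivity) fun s =>
      (Finset.sum_le_sum fun m _ => hterm m).trans (sum_le_hasSum s (fun _ _ => by positivity) hgeom)
  calc (∑' m : ℕ, (2:ℝ) ^ ((m:ℝ) * r * q) * a m ^ q) ^ (1 / q)
      ≤ (D ^ q * (1 - t)⁻¹) ^ (1 / q) :=
        rpow_le_rpow (tsum_nonneg fun m => by have := ha0 m; positivity) hsum (by positivity)
    _ = D * ((1 - t)⁻¹) ^ (1 / q) := by
        rw [mul_rpow (by positivity) (inv_nonneg.mpr (by linarith)), ← rpow_mul hD,
          mul_one_div_cancel hq.ne', rpow_one]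

theorem multiplier_holder_besov_q_general (ρ C r s q : ℝ)
    (hρ0 : 0 ≤ ρ) (hq : 0 < q)
    (hrs : r + 1/2 - ρ < s)
    (σ : ℤ → ℂ) (hσ : ∀ ξ : ℤ, ξ ≠ 0 → ‖σ ξ‖ ≤ C * |(ξ:ℝ)| ^ (-ρ)) :
    ∃ C' : ℝ, ∀ f : ℝ → ℂ, Continuous f → (∀ x, f (x + 2 * Real.pi) = f x) →
      ∀ A B : ℝ, (∀ x, ‖f x‖ ≤ A) →
      (∀ x y : ℝ, ‖f (x - y) - f x‖ ≤ B * |y| ^ s) →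
      (∑' m : ℕ, (2:ℝ) ^ ((m:ℝ) * r * q) *
          (⨆ x ∈ Set.Ico (0:ℝ) (2 * Real.pi),
            ‖∑ ξ ∈ dyadicBlock m,
              σ ξ * fourierCoef f ξ * Complex.exp (Complex.I * (x:ℂ) * (ξ:ℂ))‖) ^ q) ^ (1/q)
        ≤ C' * (A + B) := by
  refine ⟨2 * C * (π / 2) ^ s * ((1 - (2:ℝ) ^ ((r + (1 / 2 - ρ - s)) * q))⁻¹) ^ (1 / q),
    fun f hf hper A B hA hB => ?_⟩
  have hAB : ∀ x y : ℝ, ‖f (x - y) - f x‖ ≤ (A + B) * |y| ^ s := fun x y =>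
    (hB x y).trans (by gcongr; linarith [(norm_nonneg _).trans (hA 0)])
  have hblock := norm_sum_dyadicBlock_multiplier_le hρ0 hσ hf hper hAB
  have hbound0 : ∀ m : ℕ, 0 ≤ 2 * C * (π / 2) ^ s * (A + B) * ((2:ℝ) ^ m) ^ (1 / 2 - ρ - s) :=
    fun m => (norm_nonneg _).trans (hblock m 0)
  calc _ ≤ 2 * C * (π / 2) ^ s * (A + B) * ((1 - (2:ℝ) ^ ((r + (1 / 2 - ρ - s)) * q))⁻¹) ^ (1 / q) :=
        rpow_tsum_two_rpow_mul_rpow_le hq (by linarith)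
          (fun m => Real.iSup_nonneg fun x => Real.iSup_nonneg fun _ => norm_nonneg _)
          (fun m => Real.iSup_le (fun x => Real.iSup_le (fun _ => hblock m x) (hbound0 m)) (hbound0 m))
    _ = _ := by ring

theorem multiplier_holder_besov_q (ρ C r s q : ℝ)
    (hρ0 : 0 ≤ ρ) (hρ1 : ρ ≤ 1) (hs0 : 0 < s) (hs1 : s ≤ 1) (hq : 0 < q)
    (hrs : r + 1/2 - ρ < s)
    (σ : ℤ → ℂ) (hσ : ∀ ξ : ℤ, ξ ≠ 0 → ‖σ ξ‖ ≤ C * |(ξ:ℝ)| ^ (-ρ)) :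
    ∃ C' : ℝ, ∀ f : ℝ → ℂ, Continuous f → (∀ x, f (x + 2 * Real.pi) = f x) →
      ∀ A B : ℝ, (∀ x, ‖f x‖ ≤ A) →
      (∀ x y : ℝ, ‖f (x - y) - f x‖ ≤ B * |y| ^ s) →
      (∑' m : ℕ, (2:ℝ) ^ ((m:ℝ) * r * q) *
          (⨆ x ∈ Set.Ico (0:ℝ) (2 * Real.pi),
            ‖∑ ξ ∈ dyadicBlock m,
              σ ξ * fourierCoef f ξ * Complex.exp (Complex.I * (x:ℂ) * (ξ:ℂ))‖) ^ q) ^ (1/q)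
        ≤ C' * (A + B) :=
  multiplier_holder_besov_q_general ρ C r s q hρ0 hq hrs σ hσ
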